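/- Let ((ξ_k, L_k))_{k≥1} be an i.i.d. sequence of pairs of real random variables with E[ξ₁] = 0, Var(ξ₁) = σ² ∈ (0, ∞), L_k > 0 a.s. and E[L₁] < ∞. Define τ_0 = 0, τ_n = L_1 + ⋯ + L_n, g_t = sup{n ≥ 0 : τ_n ≤ t}, S_k = ξ_1 + ⋯ + ξ_k and M_n = max_{1≤k≤n} S_k (with M_0 := 0). Let ε : (0,∞) → (0,∞) be an increasing function with ε(t) → ∞ and ε(t)/t → 0 as t → ∞. Then M_{g_t}/√t − M_{g_{t−ε(t)}}/√(t−ε(t)) → 0 in probability as t → ∞. -/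

import Mathlib

/-!
By the strong law of large numbers `τ_n / n → E L₁`, hence `g_t / t → c := 1 / E L₁` almost surely,
and also `g_{t - ε(t)} / t → c` because `ε(t) = o(t)`. So with high probability both indices lie in
`[(c - θ) t, (c + θ) t]`. On this window Kolmogorov's maximal inequality makes an oscillation of `S`
of size `δ √t` have probability `O(θ / δ²)`, and `max_{k ≤ (c + θ) t} |S_k| ≥ K √t` have probability
`O(1 / K²)`. Off these events the two maxima differ by at most `2 δ √t`, and replacing
`√(t - ε(t))` by `√t` costs at most `K (√(t / (t - ε(t))) - 1) → 0`.
-/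

open MeasureTheory ProbabilityTheory Filter Topology

/-- The renewal counting variable `g_t = sup { n : τ_n ≤ t }` where
`τ_n = L_1 + ⋯ + L_n` (with `τ_0 = 0`); here `L k` denotes the paper's `L_{k+1}`. -/
noncomputable def renewalCount (L : ℕ → ℝ) (t : ℝ) : ℕ :=
  sSup {n : ℕ | ∑ k ∈ Finset.range n, L k ≤ t}

/-- `runMax ξ n = max_{1 ≤ k ≤ n} S_k` where `S_k = ξ_1 + ⋯ + ξ_k`; by convention
`runMax ξ 0 = 0`. -/
noncomputable def runMax (ξ : ℕ → ℝ) (n : ℕ) : ℝ :=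
  if h : n = 0 then 0
  else (Finset.range n).sup' (Finset.nonempty_range_iff.mpr h)
    (fun j => ∑ i ∈ Finset.range (j + 1), ξ i)

open Finset

section Kolmogorov

variable {Ω : Type*} {mΩ : MeasurableSpace Ω} {μ : Measure Ω}

lemma ProbabilityTheory.Indep.indepFun_of_measurable {β γ : Type*} [MeasurableSpace β]
    [MeasurableSpace γ] {m₁ m₂ : MeasurableSpace Ω} (h : Indep m₁ m₂ μ) {X : Ω → β} {Y : Ω → γ}
    (hX : Measurable[m₁] X) (hY : Measurable[m₂] Y) : IndepFun X Y μ :=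
  (IndepFun_iff_Indep X Y μ).2 <|
    indep_of_indep_of_le_right (indep_of_indep_of_le_left h hX.comap_le) hY.comap_le

lemma measurable_sum_of_mem_iSup_comap {ξ : ℕ → Ω → ℝ} {S : Set ℕ} {t : Finset ℕ}
    (ht : ∀ i ∈ t, i ∈ S) :
    Measurable[⨆ i ∈ S, MeasurableSpace.comap (ξ i) inferInstance] fun ω => ∑ i ∈ t, ξ i ω :=
  Finset.measurable_sum _ fun i hi =>
    (comap_measurable (ξ i)).mono (le_iSup₂ (f := fun i (_ : i ∈ S) =>
      MeasurableSpace.comap (ξ i) inferInstance) i (ht i hi)) le_rfl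

lemma setIntegral_sq_le_setIntegral_sq_add [IsFiniteMeasure μ] {X Y : Ω → ℝ} {s : Set Ω}
    (hX : MemLp X 2 μ) (hY : MemLp Y 2 μ) (hs : MeasurableSet s)
    (hXY : IndepFun (s.indicator X) Y μ) (hY0 : μ[Y] = 0) :
    ∫ ω in s, X ω ^ 2 ∂μ ≤ ∫ ω in s, (X ω + Y ω) ^ 2 ∂μ := by
  have hcross : ∫ ω in s, X ω * Y ω ∂μ = 0 := by
    rw [← integral_indicator hs]
    simp_rw [Set.indicator_mul_left]
    have := hXY.integral_fun_mul_eq_mul_integral ((hX.aestronglyMeasurable).indicator hs)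
      hY.aestronglyMeasurable
    simpa [hY0] using this
  have hXX : Integrable (fun ω => X ω ^ 2) μ := hX.integrable_sq
  have hXY' : Integrable (fun ω => X ω * Y ω) μ := hX.integrable_mul hY
  calc ∫ ω in s, X ω ^ 2 ∂μ
      = ∫ ω in s, (X ω ^ 2 + 2 * (X ω * Y ω)) ∂μ := by
        rw [integral_add hXX.integrableOn (hXY'.integrableOn.const_mul 2), integral_const_mul,
          hcross, mul_zero, add_zero]
    _ ≤ ∫ ω in s, (X ω + Y ω) ^ 2 ∂μ :=
        setIntegral_mono_on (hXX.integrableOn.add (hXY'.integrableOn.const_mul 2))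
          (hX.add hY).integrable_sq.integrableOn hs fun ω _ => by nlinarith [sq_nonneg (Y ω)]

def firstExit (S : ℕ → Ω → ℝ) (r : ℝ) (k : ℕ) : Set Ω :=
  {ω | (∀ j < k, |S j ω| < r) ∧ r ≤ |S k ω|}

lemma pairwise_disjoint_firstExit (S : ℕ → Ω → ℝ) (r : ℝ) :
    Pairwise fun i j => Disjoint (firstExit S r i) (firstExit S r j) := by
  intro i j hij
  rcases lt_or_gt_of_ne hij with h | h
  · exact Set.disjoint_left.2 fun ω hi hj => (hj.1 i h).not_ge hi.2
  · exact Set.disjoint_left.2 fun ω hi hj => (hi.1 j h).not_ge hj.2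

lemma setOf_exists_le_subset_biUnion_firstExit (S : ℕ → Ω → ℝ) (r : ℝ) (n : ℕ) :
    {ω | ∃ m ≤ n, r ≤ |S m ω|} ⊆ ⋃ k ∈ range (n + 1), firstExit S r k := by
  intro ω hω
  classical
  obtain ⟨hkn, hk⟩ := Nat.find_spec hω
  refine Set.mem_biUnion (mem_range.2 (Nat.lt_succ_of_le hkn)) ⟨fun j hj => ?_, hk⟩
  exact lt_of_not_ge fun h => Nat.find_min hω hj ⟨hj.le.trans hkn, h⟩

lemma measurableSet_firstExit {ξ : ℕ → Ω → ℝ} (r : ℝ) (k : ℕ) :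
    MeasurableSet[⨆ i ∈ Set.Iio k, MeasurableSpace.comap (ξ i) inferInstance]
      (firstExit (fun j ω => ∑ i ∈ range j, ξ i ω) r k) := by
  have hS : ∀ j ≤ k, Measurable[⨆ i ∈ Set.Iio k, MeasurableSpace.comap (ξ i) inferInstance]
      fun ω => ∑ i ∈ range j, ξ i ω := fun j hj =>
    measurable_sum_of_mem_iSup_comap fun i hi => (mem_range.1 hi).trans_le hj
  have hset : firstExit (fun j ω => ∑ i ∈ range j, ξ i ω) r k
      = (⋂ j ∈ Set.Iio k, {ω | |∑ i ∈ range j, ξ i ω| < r}) ∩ {ω | r ≤ |∑ i ∈ range k, ξ i ω|} := by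
    ext ω; simp [firstExit]
  rw [hset]
  exact (MeasurableSet.biInter (Set.to_countable _) fun j hj =>
    (continuous_abs.measurable.comp (hS j hj.le)) measurableSet_Iio).inter
    ((continuous_abs.measurable.comp (hS k le_rfl)) measurableSet_Ici)

variable [IsFiniteMeasure μ] {ξ : ℕ → Ω → ℝ} (hmeas : ∀ i, Measurable (ξ i))
  (hind : iIndepFun ξ μ) (hL2 : ∀ i, MemLp (ξ i) 2 μ) (hmean : ∀ i, μ[ξ i] = 0)
include hmeas hind hL2 hmean

lemma setIntegral_sq_sum_range_le {k n : ℕ} (hkn : k ≤ n) {s : Set Ω}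
    (hs : MeasurableSet[⨆ i ∈ Set.Iio k, MeasurableSpace.comap (ξ i) inferInstance] s) :
    ∫ ω in s, (∑ i ∈ range k, ξ i ω) ^ 2 ∂μ ≤ ∫ ω in s, (∑ i ∈ range n, ξ i ω) ^ 2 ∂μ := by
  have hpast : Measurable[⨆ i ∈ Set.Iio k, MeasurableSpace.comap (ξ i) inferInstance]
      fun ω => ∑ i ∈ range k, ξ i ω :=
    measurable_sum_of_mem_iSup_comap fun i hi => mem_range.1 hi
  have hfuture : Measurable[⨆ i ∈ Set.Ici k, MeasurableSpace.comap (ξ i) inferInstance]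
      fun ω => ∑ i ∈ Ico k n, ξ i ω :=
    measurable_sum_of_mem_iSup_comap fun i hi => (mem_Ico.1 hi).1
  have hindep := indep_iSup_of_disjoint (fun i => (hmeas i).comap_le) hind
    (Set.Iio_disjoint_Ici (le_refl k))
  simp_rw [← sum_range_add_sum_Ico _ hkn]
  refine setIntegral_sq_le_setIntegral_sq_add (memLp_finsetSum _ fun i _ => hL2 i)
    (memLp_finsetSum _ fun i _ => hL2 i)
    (iSup₂_le (fun i _ => (hmeas i).comap_le) s hs)
    (hindep.indepFun_of_measurable (hpast.indicator hs) hfuture) ?_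
  rw [integral_finsetSum _ fun i _ => (hL2 i).integrable one_le_two]
  exact sum_eq_zero fun i _ => hmean i

lemma integral_sq_sum_range (n : ℕ) :
    ∫ ω, (∑ i ∈ range n, ξ i ω) ^ 2 ∂μ = ∑ i ∈ range n, ∫ ω, ξ i ω ^ 2 ∂μ := by
  have hsum := IndepFun.variance_sum (s := range n) (fun i _ => hL2 i)
    fun i _ j _ hij => hind.indepFun hij
  have hmean_sum : μ[∑ i ∈ range n, ξ i] = 0 := by
    simp only [Finset.sum_apply]
    rw [integral_finsetSum _ fun i _ => (hL2 i).integrable one_le_two]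
    exact sum_eq_zero fun i _ => hmean i
  rw [variance_of_integral_eq_zero (Finset.aemeasurable_sum _ fun i _ => (hmeas i).aemeasurable)
    hmean_sum] at hsum
  simpa [Finset.sum_apply, variance_of_integral_eq_zero (hmeas _).aemeasurable (hmean _)]
    using hsum

lemma sq_mul_measureReal_firstExit_le {k n : ℕ} (hkn : k ≤ n) {r : ℝ} (hr : 0 < r) :
    r ^ 2 * μ.real (firstExit (fun j ω => ∑ i ∈ range j, ξ i ω) r k)
      ≤ ∫ ω in firstExit (fun j ω => ∑ i ∈ range j, ξ i ω) r k, (∑ i ∈ range n, ξ i ω) ^ 2 ∂μ := by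
  have hA := measurableSet_firstExit (ξ := ξ) r k
  calc r ^ 2 * μ.real (firstExit _ r k)
      ≤ ∫ ω in firstExit (fun j ω => ∑ i ∈ range j, ξ i ω) r k, (∑ i ∈ range k, ξ i ω) ^ 2 ∂μ := by
        rw [mul_comm, ← smul_eq_mul]
        refine setIntegral_ge_of_const_le (iSup₂_le (fun i _ => (hmeas i).comap_le) _ hA)
          (measure_ne_top μ _) (fun ω hω => ?_)
          (memLp_finsetSum _ fun i _ => hL2 i).integrable_sq.integrableOn
        simpa [sq_abs] using pow_le_pow_left₀ hr.le hω.2 2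
    _ ≤ _ := setIntegral_sq_sum_range_le hmeas hind hL2 hmean hkn hA

theorem kolmogorov_maximal_ineq (n : ℕ) {r : ℝ} (hr : 0 < r) :
    μ.real {ω | ∃ m ≤ n, r ≤ |∑ i ∈ range m, ξ i ω|}
      ≤ (∑ i ∈ range n, ∫ ω, ξ i ω ^ 2 ∂μ) / r ^ 2 := by
  set A := firstExit (fun j ω => ∑ i ∈ range j, ξ i ω) r
  have hA : ∀ k, MeasurableSet (A k) := fun k =>
    iSup₂_le (fun i _ => (hmeas i).comap_le) _ (measurableSet_firstExit r k)
  have hdisj : (↑(range (n + 1)) : Set ℕ).PairwiseDisjoint A :=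
    fun i _ j _ hij => pairwise_disjoint_firstExit _ r hij
  have hSn : Integrable (fun ω => (∑ i ∈ range n, ξ i ω) ^ 2) μ :=
    (memLp_finsetSum _ fun i _ => hL2 i).integrable_sq
  rw [le_div_iff₀ (by positivity), mul_comm]
  calc r ^ 2 * μ.real {ω | ∃ m ≤ n, r ≤ |∑ i ∈ range m, ξ i ω|}
      ≤ r ^ 2 * ∑ k ∈ range (n + 1), μ.real (A k) := by
        rw [← measureReal_biUnion_finset hdisj fun k _ => hA k]
        exact mul_le_mul_of_nonneg_left (measureReal_mono
          (setOf_exists_le_subset_biUnion_firstExit _ r n) (measure_ne_top _ _)) (sq_nonneg r)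
    _ ≤ ∑ k ∈ range (n + 1), ∫ ω in A k, (∑ i ∈ range n, ξ i ω) ^ 2 ∂μ := by
        rw [mul_sum]
        exact sum_le_sum fun k hk => sq_mul_measureReal_firstExit_le hmeas hind hL2 hmean
          (Nat.lt_succ_iff.1 (mem_range.1 hk)) hr
    _ = ∫ ω in ⋃ k ∈ range (n + 1), A k, (∑ i ∈ range n, ξ i ω) ^ 2 ∂μ :=
        (integral_biUnion_finset _ (fun k _ => hA k) hdisj fun k _ => hSn.integrableOn).symm
    _ ≤ ∫ ω, (∑ i ∈ range n, ξ i ω) ^ 2 ∂μ :=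
        setIntegral_le_integral hSn (ae_of_all _ fun ω => sq_nonneg _)
    _ = ∑ i ∈ range n, ∫ ω, ξ i ω ^ 2 ∂μ := integral_sq_sum_range hmeas hind hL2 hmean n

end Kolmogorov

section Renewal

variable {L : ℕ → ℝ} {ℓ : ℝ} (hℓ : 0 < ℓ)
  (hτ : Tendsto (fun n : ℕ => (∑ k ∈ range n, L k) / n) atTop (𝓝 ℓ))
include hℓ hτ

lemma tendsto_sum_range_atTop : Tendsto (fun n : ℕ => ∑ k ∈ range n, L k) atTop atTop := by
  refine tendsto_atTop_mono' _ ?_ ((tendsto_natCast_atTop_atTop).const_mul_atTop (half_pos hℓ))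
  filter_upwards [hτ.eventually (lt_mem_nhds (half_lt_self hℓ)), eventually_gt_atTop 0]
    with n hn hn0
  exact ((lt_div_iff₀ (Nat.cast_pos.2 hn0)).1 hn).le

lemma bddAbove_setOf_sum_range_le (t : ℝ) : BddAbove {n : ℕ | ∑ k ∈ range n, L k ≤ t} := by
  obtain ⟨N, hN⟩ := eventually_atTop.1 ((tendsto_sum_range_atTop hℓ hτ).eventually_gt_atTop t)
  exact ⟨N, fun n hn => le_of_not_gt fun h => (hN n h.le).not_ge hn⟩

lemma le_renewalCount {t : ℝ} {n : ℕ} (h : ∑ k ∈ range n, L k ≤ t) : n ≤ renewalCount L t :=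
  le_csSup (bddAbove_setOf_sum_range_le hℓ hτ t) h

lemma sum_range_renewalCount_le {t : ℝ} (ht : 0 ≤ t) :
    ∑ k ∈ range (renewalCount L t), L k ≤ t :=
  Nat.sSup_mem ⟨0, by simp [ht]⟩ (bddAbove_setOf_sum_range_le hℓ hτ t)

lemma lt_sum_range_renewalCount_succ (t : ℝ) :
    t < ∑ k ∈ range (renewalCount L t + 1), L k :=
  lt_of_not_ge fun h => (le_renewalCount hℓ hτ h).not_gt (Nat.lt_succ_self _)

lemma tendsto_renewalCount_atTop : Tendsto (fun t => renewalCount L t) atTop atTop :=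
  tendsto_atTop.2 fun n =>
    eventually_atTop.2 ⟨∑ k ∈ range n, L k, fun _ ht => le_renewalCount hℓ hτ ht⟩

theorem tendsto_renewalCount_div : Tendsto (fun t => (renewalCount L t : ℝ) / t) atTop (𝓝 ℓ⁻¹) := by
  set g : ℝ → ℕ := renewalCount L
  have hg := tendsto_renewalCount_atTop hℓ hτ
  have hτ' : Tendsto (fun n : ℕ => (∑ k ∈ range (n + 1), L k) / n) atTop (𝓝 ℓ) := by
    have h := ((hτ.comp (tendsto_add_atTop_nat 1)).div (tendsto_natCast_div_add_atTop (1 : ℝ))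
      one_ne_zero)
    rw [div_one] at h
    refine h.congr' (eventually_gt_atTop 0 |>.mono fun n hn => ?_)
    have : (n : ℝ) ≠ 0 := Nat.cast_ne_zero.2 hn.ne'
    simp only [Pi.div_apply, Function.comp_apply, Nat.cast_add, Nat.cast_one]
    field_simp
  -- `τ_{g t} ≤ t < τ_{g t + 1}` squeezes `t / g t` towards `ℓ`.
  have hsqueeze : Tendsto (fun t => t / (g t : ℝ)) atTop (𝓝 ℓ) := by
    refine tendsto_of_tendsto_of_tendsto_of_le_of_le' (hτ.comp hg) (hτ'.comp hg) ?_ ?_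
    · filter_upwards [hg.eventually_gt_atTop 0, eventually_ge_atTop 0] with t hgt ht
      exact div_le_div_of_nonneg_right (sum_range_renewalCount_le hℓ hτ ht) (Nat.cast_nonneg _)
    · filter_upwards [hg.eventually_gt_atTop 0] with t hgt
      exact div_le_div_of_nonneg_right (lt_sum_range_renewalCount_succ hℓ hτ t).le
        (Nat.cast_nonneg _)
  simpa only [inv_div] using hsqueeze.inv₀ hℓ.ne'

lemma tendsto_renewalCount_comp_div {s : ℝ → ℝ} (hs : Tendsto s atTop atTop)
    (hst : Tendsto (fun t => s t / t) atTop (𝓝 1)) :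
    Tendsto (fun t => (renewalCount L (s t) : ℝ) / t) atTop (𝓝 ℓ⁻¹) := by
  have h := ((tendsto_renewalCount_div hℓ hτ).comp hs).mul hst
  rw [mul_one] at h
  refine h.congr' ((hs.eventually_ne_atTop 0).mono fun t ht => ?_)
  simp only [Function.comp_apply]
  rw [div_mul_div_cancel₀ ht]

end Renewal

lemma renewalCount_eq_succ_iff {L : ℕ → ℝ} {t : ℝ} {n : ℕ} :
    renewalCount L t = n + 1 ↔ IsGreatest {m : ℕ | ∑ k ∈ range m, L k ≤ t} (n + 1) := by
  refine ⟨fun h => ?_, fun h => h.csSup_eq⟩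
  have hne : {m : ℕ | ∑ k ∈ range m, L k ≤ t}.Nonempty := by
    by_contra hne
    rw [Set.not_nonempty_iff_eq_empty] at hne
    simp [renewalCount, hne] at h
  have hbdd : BddAbove {m : ℕ | ∑ k ∈ range m, L k ≤ t} := by
    by_contra hbdd
    simp [renewalCount, csSup_of_not_bddAbove hbdd] at h
  exact h ▸ ⟨Nat.sSup_mem hne hbdd, fun m hm => le_csSup hbdd hm⟩

lemma measurable_renewalCount {Ω : Type*} [MeasurableSpace Ω] {L : ℕ → Ω → ℝ}
    (hL : ∀ k, Measurable (L k)) (t : ℝ) :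
    Measurable fun ω => renewalCount (fun k => L k ω) t := by
  have hτ : ∀ m, Measurable fun ω => ∑ k ∈ range m, L k ω :=
    fun m => Finset.measurable_sum _ fun k _ => hL k
  have hsucc : ∀ n : ℕ, MeasurableSet ((fun ω => renewalCount (fun k => L k ω) t) ⁻¹' {n + 1}) := by
    intro n
    simp only [Set.preimage, Set.mem_singleton_iff, renewalCount_eq_succ_iff, IsGreatest,
      upperBounds, Set.mem_ofPred_eq]
    exact measurableSet_setOfPred.2 <| (measurableSet_le (hτ _) measurable_const).mem.and <|
      Measurable.forall fun m => ((measurableSet_le (hτ m) measurable_const).mem).imp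
        measurable_const
  refine measurable_to_countable' fun n => ?_
  cases n with
  | succ n => exact hsucc n
  | zero =>
    have h0 : (fun ω => renewalCount (fun k => L k ω) t) ⁻¹' {0}
        = (⋃ n : ℕ, (fun ω => renewalCount (fun k => L k ω) t) ⁻¹' {n + 1})ᶜ := by
      ext ω
      simp only [Set.mem_preimage, Set.mem_singleton_iff, Set.mem_compl_iff, Set.mem_iUnion]
      exact ⟨fun h ⟨m, hm⟩ => by omega, fun h => by_contra fun h' => h ⟨_, (Nat.succ_pred h').symm⟩⟩
    rw [h0]
    exact (MeasurableSet.iUnion hsucc).compl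

section RunMax

variable (ξ : ℕ → ℝ)

@[simp] lemma runMax_zero : runMax ξ 0 = 0 := rfl

lemma le_runMax {k n : ℕ} (hk : 1 ≤ k) (hkn : k ≤ n) : ∑ i ∈ range k, ξ i ≤ runMax ξ n := by
  rw [runMax, dif_neg (by omega)]
  obtain ⟨j, rfl⟩ := Nat.exists_eq_add_of_le' hk
  exact le_sup' (fun j => ∑ i ∈ range (j + 1), ξ i) (mem_range.2 (by omega))

lemma sum_range_le_runMax (n : ℕ) : ∑ i ∈ range n, ξ i ≤ runMax ξ n := by
  rcases Nat.eq_zero_or_pos n with rfl | hn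
  · simp
  · exact le_runMax ξ hn le_rfl

lemma exists_runMax_eq {n : ℕ} (hn : n ≠ 0) :
    ∃ k, 1 ≤ k ∧ k ≤ n ∧ runMax ξ n = ∑ i ∈ range k, ξ i := by
  rw [runMax, dif_neg hn]
  obtain ⟨j, hj, hjeq⟩ := exists_mem_eq_sup' (nonempty_range_iff.2 hn)
    (fun j => ∑ i ∈ range (j + 1), ξ i)
  exact ⟨j + 1, by omega, mem_range.1 hj, hjeq⟩

lemma abs_runMax_le {n : ℕ} {y : ℝ} (h : ∀ k ≤ n, |∑ i ∈ range k, ξ i| ≤ y) :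
    |runMax ξ n| ≤ y := by
  rcases eq_or_ne n 0 with rfl | hn
  · simpa using h 0 le_rfl
  · obtain ⟨k, -, hkn, hk⟩ := exists_runMax_eq ξ hn
    exact hk ▸ h k hkn

lemma abs_runMax_sub_runMax_le {a b : ℕ} (hab : a ≤ b) {x : ℝ}
    (h : ∀ k, a ≤ k → k ≤ b → |∑ i ∈ range k, ξ i - ∑ i ∈ range a, ξ i| ≤ x) :
    |runMax ξ b - runMax ξ a| ≤ x := by
  rcases eq_or_ne b 0 with rfl | hb
  · obtain rfl : a = 0 := Nat.le_zero.1 hab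
    simpa using h 0 le_rfl le_rfl
  obtain ⟨j, hj1, hjb, hj⟩ := exists_runMax_eq ξ hb
  rcases eq_or_ne a 0 with rfl | ha
  · simpa [hj] using h j (Nat.zero_le j) hjb
  -- `runMax ξ 0 = 0` breaks monotonicity, hence the case split; for `a ≥ 1` a new maximum
  -- beyond `a` exceeds `S_a` by at most `x`.
  obtain ⟨j', hj'1, hj'a, hj'⟩ := exists_runMax_eq ξ ha
  have hmono : runMax ξ a ≤ runMax ξ b := hj' ▸ le_runMax ξ hj'1 (hj'a.trans hab)
  have hupper : runMax ξ b ≤ runMax ξ a + x := by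
    rcases le_or_gt j a with hja | hja
    · linarith [hj ▸ le_runMax ξ hj1 hja, (abs_nonneg _).trans (h a le_rfl hab)]
    · linarith [(abs_le.1 (h j hja.le hjb)).2, sum_range_le_runMax ξ a]
  rw [abs_of_nonneg (sub_nonneg.2 hmono)]
  linarith

lemma abs_runMax_sub_runMax_le_two_mul {A B a b : ℕ} (ha : A ≤ a ∧ a ≤ B) (hb : A ≤ b ∧ b ≤ B)
    {x : ℝ} (h : ∀ k, A ≤ k → k ≤ B → |∑ i ∈ range k, ξ i - ∑ i ∈ range A, ξ i| ≤ x) :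
    |runMax ξ b - runMax ξ a| ≤ 2 * x := by
  wlog hab : a ≤ b generalizing a b
  · rw [abs_sub_comm]; exact this hb ha (le_of_not_ge hab)
  refine abs_runMax_sub_runMax_le ξ hab fun k hak hkb => ?_
  calc |∑ i ∈ range k, ξ i - ∑ i ∈ range a, ξ i|
      ≤ |∑ i ∈ range k, ξ i - ∑ i ∈ range A, ξ i| + |∑ i ∈ range a, ξ i - ∑ i ∈ range A, ξ i| :=
        (abs_sub_le _ (∑ i ∈ range A, ξ i) _).trans_eq (by rw [abs_sub_comm (∑ i ∈ range A, ξ i)])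
    _ ≤ 2 * x := by linarith [h k (ha.1.trans hak) (hkb.trans hb.2), h a ha.1 ha.2]

lemma abs_runMax_div_sqrt_sub_le {A B a b : ℕ} (ha : A ≤ a ∧ a ≤ B) (hb : A ≤ b ∧ b ≤ B)
    {s t K x : ℝ} (hs : 0 < s) (ht : 0 < t)
    (hS : ∀ k ≤ B, |∑ i ∈ range k, ξ i| ≤ K * √t)
    (hinc : ∀ k, A ≤ k → k ≤ B → |∑ i ∈ range k, ξ i - ∑ i ∈ range A, ξ i| ≤ x * √t)
    (hcorr : K * |√(t / s) - 1| ≤ x) :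
    |runMax ξ b / √t - runMax ξ a / √s| ≤ 3 * x := by
  have hu : 0 < √t := Real.sqrt_pos.2 ht
  have hv : 0 < √s := Real.sqrt_pos.2 hs
  have hdiff : |runMax ξ b - runMax ξ a| / √t ≤ 2 * x := by
    rw [div_le_iff₀ hu]; linarith [abs_runMax_sub_runMax_le_two_mul ξ ha hb hinc]
  have hMa : |runMax ξ a| / √t ≤ K := by
    rw [div_le_iff₀ hu]; exact abs_runMax_le ξ fun k hk => hS k (hk.trans ha.2)
  have hsplit : runMax ξ b / √t - runMax ξ a / √s
      = (runMax ξ b - runMax ξ a) / √t - runMax ξ a / √t * (√(t / s) - 1) := by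
    rw [Real.sqrt_div' _ hs.le]; field_simp; ring
  calc |runMax ξ b / √t - runMax ξ a / √s|
      ≤ |runMax ξ b - runMax ξ a| / √t + |runMax ξ a| / √t * |√(t / s) - 1| := by
        rw [hsplit]
        refine (abs_sub _ _).trans_eq ?_
        rw [abs_mul, abs_div, abs_div, abs_of_pos hu]
    _ ≤ 2 * x + K * |√(t / s) - 1| := by gcongr
    _ ≤ 3 * x := by linarith

end RunMax

lemma integral_pos_of_ae_pos {α : Type*} {mα : MeasurableSpace α} {μ : Measure α} [NeZero μ]
    {f : α → ℝ} (hf : ∀ᵐ x ∂μ, 0 < f x) (hfi : Integrable f μ) : 0 < ∫ x, f x ∂μ := by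
  refine (integral_pos_iff_support_of_nonneg_ae (hf.mono fun _ hx => hx.le) hfi).2
    (pos_iff_ne_zero.2 fun h => ?_)
  obtain ⟨x, hx, hx'⟩ := (hf.and (measure_eq_zero_iff_ae_notMem.1 h)).exists
  exact hx' hx.ne'

lemma tendstoInMeasure_of_tendsto_ae_of_isCountablyGenerated {α ι E : Type*}
    {mα : MeasurableSpace α} {μ : Measure α} [IsFiniteMeasure μ] [PseudoMetricSpace E] {l : Filter ι}
    [l.IsCountablyGenerated] {f : ι → α → E} {g : α → E}
    (hf : ∀ i, AEStronglyMeasurable (f i) μ)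
    (hfg : ∀ᵐ x ∂μ, Tendsto (fun i => f i x) l (𝓝 (g x))) : TendstoInMeasure μ f l g :=
  fun ε hε => tendsto_of_seq_tendsto fun u hu =>
    tendstoInMeasure_of_tendsto_ae (fun n => hf (u n)) (hfg.mono fun _ hx => hx.comp hu) ε hε

section Maxima

variable {Ω : Type*} {mΩ : MeasurableSpace Ω} {μ : Measure Ω} [IsFiniteMeasure μ]
  {ξ : ℕ → Ω → ℝ} {v : ℝ} (hmeas : ∀ i, Measurable (ξ i)) (hind : iIndepFun ξ μ)
  (hL2 : ∀ i, MemLp (ξ i) 2 μ) (hmean : ∀ i, μ[ξ i] = 0) (hvar : ∀ i, ∫ ω, ξ i ω ^ 2 ∂μ = v)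
include hmeas hind hL2 hmean hvar

lemma kolmogorov_maximal_ineq_scaled (a n : ℕ) {x y t : ℝ} (hx : 0 < x) (ht : 0 < t)
    (hn : (n : ℝ) ≤ y * t) :
    μ.real {ω | ∃ m ≤ n, x * √t ≤ |∑ i ∈ range m, ξ (a + i) ω|} ≤ y * v / x ^ 2 := by
  have hv : 0 ≤ v := hvar 0 ▸ integral_nonneg fun ω => sq_nonneg _
  have h := kolmogorov_maximal_ineq (ξ := fun i => ξ (a + i)) (fun i => hmeas _)
    (hind.precomp (add_right_injective a)) (fun i => hL2 _) (fun i => hmean _) n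
    (by positivity : 0 < x * √t)
  simp only [hvar, sum_const, card_range, nsmul_eq_mul] at h
  refine h.trans ?_
  rw [mul_pow, Real.sq_sqrt ht.le, div_le_div_iff₀ (by positivity) (by positivity)]
  nlinarith [mul_le_mul_of_nonneg_right hn hv]

/-- The last two terms are Kolmogorov's bounds for `max_{k ≤ (c + θ) t} |S_k| ≥ K √t` and for an
oscillation `≥ x √t` of `S` on `[(c - θ) t, (c + θ) t]`. -/
lemma measureReal_lt_abs_runMax_div_sqrt_sub_le (a b : Ω → ℕ) {c θ K x s t : ℝ} (hc : 0 ≤ c)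
    (hθ : 0 ≤ θ) (hK : 0 < K) (hx : 0 < x) (hs : 0 < s) (ht : 0 < t)
    (hcorr : K * |√(t / s) - 1| ≤ x) :
    μ.real {ω | 3 * x < |runMax (ξ · ω) (b ω) / √t - runMax (ξ · ω) (a ω) / √s|}
      ≤ μ.real {ω | θ ≤ |(b ω : ℝ) / t - c|} + μ.real {ω | θ ≤ |(a ω : ℝ) / t - c|}
        + (c + θ) * v / K ^ 2 + 2 * θ * v / x ^ 2 := by
  set A := ⌈(c - θ) * t⌉₊
  set B := ⌊(c + θ) * t⌋₊
  have hB : (B : ℝ) ≤ (c + θ) * t := Nat.floor_le (by positivity)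
  have hBA : ((B - A : ℕ) : ℝ) ≤ 2 * θ * t := by
    rcases le_total A B with h | h
    · rw [Nat.cast_sub h]; linarith [Nat.le_ceil ((c - θ) * t)]
    · rw [Nat.sub_eq_zero_of_le h, Nat.cast_zero]; positivity
  have hmem : ∀ n : ℕ, |(n : ℝ) / t - c| < θ → A ≤ n ∧ n ≤ B := by
    intro n hn
    rw [abs_sub_lt_iff, sub_lt_iff_lt_add, sub_lt_comm, div_lt_iff₀ ht, lt_div_iff₀ ht] at hn
    exact ⟨Nat.ceil_le.2 hn.2.le, Nat.le_floor (by linarith)⟩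
  have hK1 : μ.real {ω | ∃ m ≤ B, K * √t ≤ |∑ i ∈ range m, ξ i ω|} ≤ (c + θ) * v / K ^ 2 := by
    simpa only [zero_add] using
      kolmogorov_maximal_ineq_scaled hmeas hind hL2 hmean hvar 0 B hK ht hB
  have hK2 := kolmogorov_maximal_ineq_scaled hmeas hind hL2 hmean hvar A (B - A) hx ht hBA
  set G := {ω | θ ≤ |(b ω : ℝ) / t - c|}
  set H := {ω | θ ≤ |(a ω : ℝ) / t - c|}
  set E₁ := {ω | ∃ m ≤ B, K * √t ≤ |∑ i ∈ range m, ξ i ω|}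
  set E₂ := {ω | ∃ m ≤ B - A, x * √t ≤ |∑ i ∈ range m, ξ (A + i) ω|}
  have hincl : {ω | 3 * x < |runMax (ξ · ω) (b ω) / √t - runMax (ξ · ω) (a ω) / √s|}
      ⊆ G ∪ H ∪ E₁ ∪ E₂ := by
    intro ω hω
    by_contra hnot
    simp only [G, H, E₁, E₂, Set.mem_union, Set.mem_ofPred_eq, not_or, not_le, not_exists,
      not_and] at hnot
    obtain ⟨⟨⟨hb, ha⟩, hS⟩, hinc⟩ := hnot
    refine hω.out.not_ge (abs_runMax_div_sqrt_sub_le _ (hmem _ ha) (hmem _ hb) hs ht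
      (fun k hk => (hS k hk).le) (fun k hAk hkB => ?_) hcorr)
    have hsum := sum_range_add_sub_sum_range (fun i => ξ i ω) A (k - A)
    simp only [Nat.add_sub_cancel' hAk] at hsum
    exact hsum ▸ (hinc (k - A) (by omega)).le
  refine (measureReal_mono hincl).trans ?_
  linarith [measureReal_union_le (μ := μ) (G ∪ H ∪ E₁) E₂, measureReal_union_le (μ := μ) (G ∪ H) E₁,
    measureReal_union_le (μ := μ) G H]

theorem tendstoInMeasure_runMax_div_sqrt_sub {a b : ℝ → Ω → ℕ} {s : ℝ → ℝ} {c : ℝ} (hc : 0 ≤ c)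
    (hb : TendstoInMeasure μ (fun t ω => (b t ω : ℝ) / t) atTop fun _ => c)
    (ha : TendstoInMeasure μ (fun t ω => (a t ω : ℝ) / t) atTop fun _ => c)
    (hs : ∀ᶠ t in atTop, 0 < s t) (hts : Tendsto (fun t => t / s t) atTop (𝓝 1)) :
    TendstoInMeasure μ
      (fun t ω => runMax (ξ · ω) (b t ω) / √t - runMax (ξ · ω) (a t ω) / √(s t)) atTop
      fun _ => 0 := by
  rw [tendstoInMeasure_iff_measureReal_dist] at ha hb ⊢
  simp only [Real.dist_eq, sub_zero] at ha hb ⊢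
  intro δ hδ
  rw [Metric.tendsto_nhds]
  intro r hr
  set x := δ / 4 with hx_def
  have hx : 0 < x := by positivity
  obtain ⟨θ, hθv, hθ⟩ : ∃ θ, 2 * θ * v / x ^ 2 < r / 4 ∧ 0 < θ := by
    have hcont : Continuous fun θ : ℝ => 2 * θ * v / x ^ 2 := by fun_prop
    have hlim : Tendsto (fun θ : ℝ => 2 * θ * v / x ^ 2) (𝓝[>] 0) (𝓝 0) := by
      simpa using (hcont.tendsto 0).mono_left nhdsWithin_le_nhds
    exact ((hlim.eventually (gt_mem_nhds (by positivity))).and self_mem_nhdsWithin).exists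
  obtain ⟨K, hKv, hK⟩ : ∃ K, (c + θ) * v / K ^ 2 < r / 4 ∧ 0 < K :=
    (((tendsto_const_nhds.div_atTop (tendsto_pow_atTop two_ne_zero)).eventually
      (gt_mem_nhds (by positivity))).and (eventually_gt_atTop 0)).exists
  have hcorr : ∀ᶠ t in atTop, K * |√(t / s t) - 1| ≤ x := by
    have h := ((Real.continuous_sqrt.tendsto 1).comp hts).sub_const 1 |>.abs.const_mul K
    simp only [Real.sqrt_one, sub_self, abs_zero, mul_zero] at h
    exact h.eventually (ge_mem_nhds hx)
  filter_upwards [hb θ hθ |>.eventually (gt_mem_nhds (by positivity : 0 < r / 4)),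
    ha θ hθ |>.eventually (gt_mem_nhds (by positivity : 0 < r / 4)), hs, hcorr,
    eventually_gt_atTop 0] with t hbt hat hst hct ht
  rw [Real.dist_0_eq_abs, abs_of_nonneg measureReal_nonneg]
  have h3x : {ω | δ ≤ |runMax (ξ · ω) (b t ω) / √t - runMax (ξ · ω) (a t ω) / √(s t)|}
      ⊆ {ω | 3 * x < |runMax (ξ · ω) (b t ω) / √t - runMax (ξ · ω) (a t ω) / √(s t)|} :=
    fun ω (hω : δ ≤ _) => show 3 * x < _ by linarith
  refine (measureReal_mono h3x).trans_lt ((measureReal_lt_abs_runMax_div_sqrt_sub_le hmeas hind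
    hL2 hmean hvar (a t) (b t) hc hθ.le hK hx hst ht hct).trans_lt ?_)
  linarith

end Maxima

lemma tendsto_sub_div_self {ε : ℝ → ℝ} (h : Tendsto (fun t => ε t / t) atTop (𝓝 0)) :
    Tendsto (fun t => (t - ε t) / t) atTop (𝓝 1) := by
  have h1 : Tendsto (fun t => 1 - ε t / t) atTop (𝓝 1) := by simpa using tendsto_const_nhds.sub h
  refine h1.congr' ((eventually_ne_atTop 0).mono fun t ht => ?_)
  simp only [sub_div, div_self ht]

lemma tendsto_sub_atTop {ε : ℝ → ℝ} (h : Tendsto (fun t => ε t / t) atTop (𝓝 0)) :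
    Tendsto (fun t => t - ε t) atTop atTop :=
  (tendsto_id.atTop_mul_pos one_pos (tendsto_sub_div_self h)).congr'
    ((eventually_ne_atTop 0).mono fun _ ht => mul_div_cancel₀ _ ht)

theorem stmt10_general {Ω : Type*} [MeasurableSpace Ω] (μ : Measure Ω) [IsProbabilityMeasure μ]
    (ξ L : ℕ → Ω → ℝ) (σ : ℝ)
    (hmeas : ∀ k, Measurable fun ω => (ξ k ω, L k ω))
    (hindep : iIndepFun (fun k ω => (ξ k ω, L k ω)) μ)
    (hident : ∀ k, IdentDistrib (fun ω => (ξ k ω, L k ω)) (fun ω => (ξ 0 ω, L 0 ω)) μ μ)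
    (hmean : ∫ ω, ξ 0 ω ∂μ = 0)
    (hsqint : Integrable (fun ω => (ξ 0 ω) ^ 2) μ)
    (hvar : ∫ ω, (ξ 0 ω) ^ 2 ∂μ = σ ^ 2)
    (hLpos : ∀ k, ∀ᵐ ω ∂μ, 0 < L k ω)
    (hLint : Integrable (L 0) μ)
    (ε : ℝ → ℝ)
    (hεsmall : Tendsto (fun t => ε t / t) atTop (𝓝 0)) :
    TendstoInMeasure μ
      (fun (t : ℝ) ω =>
        runMax (fun i => ξ i ω) (renewalCount (fun i => L i ω) t) / Real.sqrt t
          - runMax (fun i => ξ i ω) (renewalCount (fun i => L i ω) (t - ε t))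
              / Real.sqrt (t - ε t))
      atTop (fun _ => (0 : ℝ)) := by
  have hξ : ∀ k, Measurable (ξ k) := fun k => measurable_fst.comp (hmeas k)
  have hL : ∀ k, Measurable (L k) := fun k => measurable_snd.comp (hmeas k)
  have hidξ : ∀ k, IdentDistrib (ξ k) (ξ 0) μ μ := fun k => (hident k).comp measurable_fst
  have hL2 : ∀ k, MemLp (ξ k) 2 μ := fun k => (hidξ k).symm.memLp_snd
    ((memLp_two_iff_integrable_sq (hξ 0).aestronglyMeasurable).2 hsqint)
  have hℓ : 0 < ∫ ω, L 0 ω ∂μ := integral_pos_of_ae_pos (hLpos 0) hLint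
  have hτ := strong_law_ae_real L hLint
    (fun i j hij => (hindep.comp (fun _ => Prod.snd) fun _ => measurable_snd).indepFun hij)
    fun k => (hident k).comp measurable_snd
  have hg : ∀ s : ℝ → ℝ, Tendsto s atTop atTop → Tendsto (fun t => s t / t) atTop (𝓝 1) →
      TendstoInMeasure μ (fun t ω => (renewalCount (fun i => L i ω) (s t) : ℝ) / t) atTop
        fun _ => (∫ ω, L 0 ω ∂μ)⁻¹ := fun s hs hst =>
    tendstoInMeasure_of_tendsto_ae_of_isCountablyGenerated
      (fun t => ((measurable_from_nat.comp (measurable_renewalCount hL (s t))).div_const t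
        ).aestronglyMeasurable)
      (hτ.mono fun ω h => tendsto_renewalCount_comp_div hℓ h hs hst)
  have hid : Tendsto (fun t : ℝ => id t / t) atTop (𝓝 1) :=
    tendsto_const_nhds.congr' ((eventually_ne_atTop 0).mono fun t ht => (div_self ht).symm)
  have hs := tendsto_sub_div_self hεsmall
  have hs_top := tendsto_sub_atTop hεsmall
  exact tendstoInMeasure_runMax_div_sqrt_sub hξ
    (hindep.comp (fun _ => Prod.fst) fun _ => measurable_fst) hL2
    (fun k => (hidξ k).integral_eq.trans hmean)
    (fun k => ((hidξ k).comp (measurable_id.pow_const 2)).integral_eq.trans hvar)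
    (inv_nonneg.2 hℓ.le) (hg id tendsto_id hid) (hg _ hs_top hs) (hs_top.eventually_gt_atTop 0)
    (by simpa using hs.inv₀ one_ne_zero)

/-- For i.i.d. pairs `(ξ_k, L_k)` with `E[ξ₁] = 0`,
`Var(ξ₁) = σ² ∈ (0,∞)`, `L_k > 0` a.s. and `E[L₁] < ∞`, and an increasing function
`ε : (0,∞) → (0,∞)` with `ε(t) → ∞` and `ε(t)/t → 0`, one has
`M_{g_t}/√t − M_{g_{t−ε(t)}}/√(t−ε(t)) → 0` in probability as `t → ∞`. -/
theorem stmt10 {Ω : Type*} [MeasurableSpace Ω] (μ : Measure Ω) [IsProbabilityMeasure μ]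
    (ξ L : ℕ → Ω → ℝ) (σ : ℝ) (hσ : 0 < σ)
    (hmeas : ∀ k, Measurable fun ω => (ξ k ω, L k ω))
    (hindep : iIndepFun (fun k ω => (ξ k ω, L k ω)) μ)
    (hident : ∀ k, IdentDistrib (fun ω => (ξ k ω, L k ω)) (fun ω => (ξ 0 ω, L 0 ω)) μ μ)
    (hξint : Integrable (ξ 0) μ)
    (hmean : ∫ ω, ξ 0 ω ∂μ = 0)
    (hsqint : Integrable (fun ω => (ξ 0 ω) ^ 2) μ)
    (hvar : ∫ ω, (ξ 0 ω) ^ 2 ∂μ = σ ^ 2)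
    (hLpos : ∀ k, ∀ᵐ ω ∂μ, 0 < L k ω)
    (hLint : Integrable (L 0) μ)
    (ε : ℝ → ℝ)
    (hεpos : ∀ t > (0 : ℝ), 0 < ε t)
    (hεmono : ∀ s t : ℝ, 0 < s → s ≤ t → ε s ≤ ε t)
    (hεtop : Tendsto ε atTop atTop)
    (hεsmall : Tendsto (fun t => ε t / t) atTop (𝓝 0)) :
    TendstoInMeasure μ
      (fun (t : ℝ) ω =>
        runMax (fun i => ξ i ω) (renewalCount (fun i => L i ω) t) / Real.sqrt t
          - runMax (fun i => ξ i ω) (renewalCount (fun i => L i ω) (t - ε t))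
              / Real.sqrt (t - ε t))
      atTop (fun _ => (0 : ℝ)) :=
  stmt10_general μ ξ L σ hmeas hindep hident hmean hsqint hvar hLpos hLint ε hεsmall
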